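/- arXiv:1612.01712 — 2 statements merged into one kernel-verified Lean document; each statement's English description precedes it below -/
import Mathlib

section
/- Let f(x) = a_n x^n + ... + a_0 ∈ ℤ[x] with a_0 ≠ 0 and |a_n| > |a_{n-1}| + ... + |a_0|. If there exists an integer m with |m| ≥ 2 such that |f(m)| is a prime number, then f is irreducible in ℤ[x]. -/
/-!
If `|z| ≥ 1` then `|a_n z^n| > ∑_{i<n} |a_i z^i|`, so every complex root of `f` lies in the open
unit disc. For a nonconstant factor `g` of `f`, `|g(m)| = |lc g| ∏ |m - z|` over the roots `z` of
`g`, and each factor exceeds `|m| - 1 ≥ 1`, so `|g(m)| > 1`. A factorisation `f = g h` makes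
`|f(m)| = |g(m)| |h(m)|` prime, so one factor takes the value `±1` at `m`, hence is constant and a
unit.
-/

open Polynomial Finset

theorem Multiset.one_lt_prod_of_one_lt {R : Type*} [CommSemiring R] [PartialOrder R]
    [IsStrictOrderedRing R] {s : Multiset R} (hs : s ≠ 0) (h : ∀ a ∈ s, 1 < a) : 1 < s.prod := by
  obtain ⟨a, ha⟩ := exists_mem_of_ne_zero hs
  obtain ⟨t, rfl⟩ := exists_cons_of_mem ha
  rw [prod_cons]
  exact one_lt_mul_of_lt_of_le (h a (mem_cons_self a t))
    (one_le_prod fun b hb => (h b (mem_cons_of_mem hb)).le)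

namespace Polynomial

section Semiring

variable {R : Type*} [Semiring R]

theorem coeff_sum_range_C_mul_X_pow (a : ℕ → R) (n i : ℕ) :
    (∑ j ∈ range n, C (a j) * X ^ j).coeff i = if i < n then a i else 0 := by
  simp [finsetSum_coeff]

theorem natDegree_sum_range_C_mul_X_pow {a : ℕ → R} {n : ℕ} (ha : a n ≠ 0) :
    (∑ j ∈ range (n + 1), C (a j) * X ^ j).natDegree = n :=
  natDegree_eq_of_le_of_coeff_ne_zero
    (natDegree_le_iff_coeff_eq_zero.2 fun i hi => by
      rw [coeff_sum_range_C_mul_X_pow, if_neg (by omega)])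
    (by rwa [coeff_sum_range_C_mul_X_pow, if_pos n.lt_succ_self])

end Semiring

section NormedField

variable {K : Type*} [NormedField K]

theorem norm_lt_one_of_isRoot {p : K[X]}
    (hdom : ∑ i ∈ range p.natDegree, ‖p.coeff i‖ < ‖p.leadingCoeff‖) {z : K} (hz : p.IsRoot z) :
    ‖z‖ < 1 := by
  by_contra! hz1
  set d := p.natDegree
  have hlead : p.leadingCoeff * z ^ d = -∑ i ∈ range d, p.coeff i * z ^ i := by
    have h := hz.eq_zero
    rw [eval_eq_sum_range, sum_range_succ, coeff_natDegree] at h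
    linear_combination h
  have hzd : 0 < ‖z‖ ^ d := pow_pos (zero_lt_one.trans_le hz1) d
  have : ‖p.leadingCoeff‖ * ‖z‖ ^ d ≤ (∑ i ∈ range d, ‖p.coeff i‖) * ‖z‖ ^ d :=
    calc ‖p.leadingCoeff‖ * ‖z‖ ^ d = ‖∑ i ∈ range d, p.coeff i * z ^ i‖ := by
          rw [← norm_pow, ← norm_mul, hlead, norm_neg]
      _ ≤ ∑ i ∈ range d, ‖p.coeff i‖ * ‖z‖ ^ i :=
          norm_sum_le_of_le _ fun i _ => by rw [norm_mul, norm_pow]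
      _ ≤ ∑ i ∈ range d, ‖p.coeff i‖ * ‖z‖ ^ d :=
          sum_le_sum fun i hi => by
            gcongr
            exact (mem_range.1 hi).le
      _ = _ := (sum_mul ..).symm
  linarith [mul_lt_mul_of_pos_right hdom hzd]

theorem Splits.norm_leadingCoeff_lt_norm_eval {g : K[X]} (hg : g.Splits) (hdeg : 0 < g.natDegree)
    {x : K} (hx : ∀ z ∈ g.roots, 1 < ‖x - z‖) : ‖g.leadingCoeff‖ < ‖g.eval x‖ := by
  have hroots : g.roots ≠ 0 := by
    rw [← Multiset.card_pos, ← hg.natDegree_eq_card_roots]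
    exact hdeg
  have hprod : 1 < (g.roots.map (‖x - ·‖)).prod :=
    Multiset.one_lt_prod_of_one_lt (by simpa using hroots) fun r hr => by
      obtain ⟨z, hz, rfl⟩ := Multiset.mem_map.1 hr
      exact hx z hz
  have hlc : 0 < ‖g.leadingCoeff‖ := by
    simpa using ne_zero_of_natDegree_gt hdeg
  have hnorm : ‖(g.roots.map (x - ·)).prod‖ = (g.roots.map (‖x - ·‖)).prod := by
    simpa [Multiset.map_map] using map_multiset_prod (normHom : K →*₀ ℝ) (g.roots.map (x - ·))
  rw [hg.eval_eq_prod_roots x, norm_mul, hnorm]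
  exact lt_mul_of_one_lt_right hlc hprod

end NormedField

theorem one_lt_abs_eval_of_dvd {F g : ℤ[X]}
    (hdom : ∑ i ∈ range F.natDegree, |F.coeff i| < |F.leadingCoeff|) {m : ℤ} (hm : 2 ≤ |m|)
    (hg : g ∣ F) (hdeg : 0 < g.natDegree) : 1 < |g.eval m| := by
  set ι := Int.castRingHom ℂ
  have hinj : Function.Injective ι := Int.cast_injective
  have hdomℂ : ∑ i ∈ range (F.map ι).natDegree, ‖(F.map ι).coeff i‖ < ‖(F.map ι).leadingCoeff‖ := by
    simp only [natDegree_map_eq_of_injective hinj, leadingCoeff_map_of_injective hinj, coeff_map,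
      ι, eq_intCast, Complex.norm_intCast]
    exact_mod_cast hdom
  have hroots : ∀ z ∈ (g.map ι).roots, 1 < ‖(m : ℂ) - z‖ := by
    intro z hz
    have hz1 := norm_lt_one_of_isRoot hdomℂ ((isRoot_of_mem_roots hz).dvd (map_dvd ι hg))
    have hm2 : (2 : ℝ) ≤ ‖(m : ℂ)‖ := by
      rw [Complex.norm_intCast]
      exact_mod_cast hm
    linarith [norm_sub_norm_le (m : ℂ) z]
  have key := (IsAlgClosed.splits (g.map ι)).norm_leadingCoeff_lt_norm_eval
    (by rwa [natDegree_map_eq_of_injective hinj]) hroots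
  rw [leadingCoeff_map_of_injective hinj, eval_intCast_map] at key
  simp only [ι, eq_intCast, Complex.norm_intCast] at key
  have hlc : 1 ≤ |g.leadingCoeff| :=
    Int.one_le_abs (leadingCoeff_ne_zero.2 (ne_zero_of_natDegree_gt hdeg))
  exact hlc.trans_lt (by exact_mod_cast key)

theorem isUnit_of_natAbs_eval_eq_one {g : ℤ[X]} {m : ℤ}
    (hbig : 0 < g.natDegree → 1 < |g.eval m|) (h1 : (g.eval m).natAbs = 1) : IsUnit g := by
  obtain hdeg | hdeg := Nat.eq_zero_or_pos g.natDegree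
  · obtain ⟨c, rfl⟩ := natDegree_eq_zero.1 hdeg
    rw [eval_C] at h1
    exact isUnit_C.2 (Int.isUnit_iff_natAbs_eq.2 h1)
  · have := hbig hdeg
    rw [Int.abs_eq_natAbs, h1] at this
    exact absurd this (lt_irrefl 1)

theorem irreducible_of_natAbs_eval_prime {F : ℤ[X]} {m : ℤ} (hp : (F.eval m).natAbs.Prime)
    (hbig : ∀ g, g ∣ F → 0 < g.natDegree → 1 < |g.eval m|) : Irreducible F where
  not_isUnit hu := hp.ne_one (Int.isUnit_iff_natAbs_eq.1 (hu.map (evalRingHom m)))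
  isUnit_or_isUnit g h hF := by
    rw [hF, eval_mul, Int.natAbs_mul, Nat.prime_mul_iff] at hp
    rcases hp with ⟨-, hh⟩ | ⟨-, hg⟩
    · exact .inr (isUnit_of_natAbs_eval_eq_one (hbig h (Dvd.intro_left g hF.symm)) hh)
    · exact .inl (isUnit_of_natAbs_eval_eq_one (hbig g (Dvd.intro h hF.symm)) hg)

end Polynomial

theorem stmt_6_general (n : ℕ) (a : ℕ → ℤ)
    (hdom : ∑ i ∈ Finset.range n, |a i| < |a n|)
    (m : ℤ) (hm : 2 ≤ |m|)
    (hp : ((∑ i ∈ Finset.range (n + 1), Polynomial.C (a i) * Polynomial.X ^ i).eval m).natAbs.Prime) :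
    Irreducible (∑ i ∈ Finset.range (n + 1), Polynomial.C (a i) * Polynomial.X ^ i) := by
  have han : a n ≠ 0 := fun h => by
    simp only [h, abs_zero] at hdom
    exact hdom.not_ge (sum_nonneg fun i _ => abs_nonneg (a i))
  refine irreducible_of_natAbs_eval_prime hp fun g hg hdeg => one_lt_abs_eval_of_dvd ?_ hm hg hdeg
  rw [leadingCoeff, natDegree_sum_range_C_mul_X_pow han, coeff_sum_range_C_mul_X_pow,
    if_pos n.lt_succ_self]
  refine (sum_congr rfl fun i hi => ?_).trans_lt hdom
  rw [coeff_sum_range_C_mul_X_pow, if_pos (by have := mem_range.1 hi; omega)]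

theorem stmt_6 (n : ℕ) (a : ℕ → ℤ) (hn : 1 ≤ n) (h0 : a 0 ≠ 0)
    (hdom : ∑ i ∈ Finset.range n, |a i| < |a n|)
    (m : ℤ) (hm : 2 ≤ |m|)
    (hp : ((∑ i ∈ Finset.range (n + 1), Polynomial.C (a i) * Polynomial.X ^ i).eval m).natAbs.Prime) :
    Irreducible (∑ i ∈ Finset.range (n + 1), Polynomial.C (a i) * Polynomial.X ^ i) :=
  stmt_6_general n a hdom m hm hp
end

section
/- Let f(x) = a_n x^n + ... + a_0 ∈ ℤ[x] satisfy 0 < a_0 ≤ a_1 ≤ ... ≤ a_{k-1} < a_k < a_{k+1} ≤ ... ≤ a_n for some k with 0 ≤ k ≤ n-1. If there exists an integer m with |m| ≥ 2 such that |f(m)| is prime, then f is irreducible in ℤ[x]. -/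
/-!
Write `b i = a i - a (i - 1)` (with `a (-1) = 0`), so that the `b i` are nonnegative and sum to
`a n`, and `(z - 1) f(z) = a n z ^ (n + 1) - ∑ b i z ^ i`. If `f(z) = 0` with `‖z‖ ≥ 1`, then
`u = z⁻¹` lies in the closed unit disc and `a n = ∑ b i u ^ (n + 1 - i)`; since `1` is an extreme
point of the disc, `u ^ (n + 1 - i) = 1` whenever `b i > 0`. The two consecutive strict increases
give `u ^ (n + 1 - k) = u ^ (n - k) = 1`, so `z = 1`, contradicting `f(1) > 0`. Hence every complex
root of `f` lies in the open unit disc, so every nonconstant factor `g` of `f` in `ℤ[X]` satisfies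
`|g(m)| = |lc g| ∏ |m - z| > 1` for `|m| ≥ 2`, and a factorisation of `f` would split the prime
`|f(m)|` into two factors larger than `1`.
-/

open Polynomial Finset

def increment {R : Type*} [Sub R] (a : ℕ → R) : ℕ → R
  | 0 => a 0
  | i + 1 => a (i + 1) - a i

section Increment

variable {R : Type*}

theorem sum_range_succ_increment [AddCommGroup R] (a : ℕ → R) (n : ℕ) :
    ∑ i ∈ range (n + 1), increment a i = a n := by
  induction n with
  | zero => simp [increment]
  | succ n ih => rw [sum_range_succ, ih, increment, add_sub_cancel]

theorem nonneg_of_increment_nonneg [AddCommGroup R] [PartialOrder R] [IsOrderedAddMonoid R]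
    {a : ℕ → R} {n : ℕ} (hinc : ∀ i ≤ n, 0 ≤ increment a i) {i : ℕ} (hi : i ≤ n) :
    0 ≤ a i := by
  rw [← sum_range_succ_increment a i]
  exact sum_nonneg fun j hj => hinc j (by rw [mem_range] at hj; omega)

theorem sub_one_mul_sum_range_succ_mul_pow [CommRing R] (a : ℕ → R) (z : R) (n : ℕ) :
    (z - 1) * ∑ i ∈ range (n + 1), a i * z ^ i
      = a n * z ^ (n + 1) - ∑ i ∈ range (n + 1), increment a i * z ^ i := by
  induction n with
  | zero => simp only [zero_add, sum_range_one, increment]; ring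
  | succ n ih => rw [sum_range_succ, mul_add, ih, sum_range_succ _ (n + 1), increment]; ring

theorem map_increment [AddGroup R] {S F : Type*} [AddGroup S] [FunLike F R S]
    [AddMonoidHomClass F R S] (φ : F) (a : ℕ → R) (i : ℕ) :
    φ (increment a i) = increment (φ ∘ a) i := by
  cases i <;> simp [increment]

theorem sum_range_succ_pos_of_increment_pos [AddCommGroup R] [PartialOrder R]
    [IsOrderedAddMonoid R] {a : ℕ → R} {n j : ℕ} (hinc : ∀ i ≤ n, 0 ≤ increment a i)
    (hj : j ≤ n) (hpos : 0 < increment a j) : 0 < ∑ i ∈ range (n + 1), a i := by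
  have hle : increment a j ≤ a j := by
    rw [← sum_range_succ_increment a j]
    exact single_le_sum (fun i hi => hinc i (by rw [mem_range] at hi; omega))
      (self_mem_range_succ j)
  exact sum_pos' (fun i hi => nonneg_of_increment_nonneg hinc (by rw [mem_range] at hi; omega))
    ⟨j, mem_range.mpr (by omega), hpos.trans_le hle⟩

/-- Dividing `(z - 1) f(z) = 0` by `z ^ (n + 1)`. -/
theorem sum_increment_mul_inv_pow_eq_of_sum_mul_pow_eq_zero {K : Type*} [Field K] {a : ℕ → K}
    {n : ℕ} {z : K} (hz0 : z ≠ 0) (hz : ∑ i ∈ range (n + 1), a i * z ^ i = 0) :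
    ∑ i ∈ range (n + 1), increment a i * z⁻¹ ^ (n + 1 - i) = a n := by
  have h := sub_one_mul_sum_range_succ_mul_pow a z n
  rw [hz, mul_zero, eq_comm, sub_eq_zero] at h
  have hinv : ∀ i, z⁻¹ ^ i * z ^ i = 1 := fun i => by
    rw [← mul_pow, inv_mul_cancel₀ hz0, one_pow]
  calc ∑ i ∈ range (n + 1), increment a i * z⁻¹ ^ (n + 1 - i)
      = z⁻¹ ^ (n + 1) * ∑ i ∈ range (n + 1), increment a i * z ^ i := by
        rw [mul_sum]
        refine sum_congr rfl fun i hi => ?_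
        rw [← pow_sub_mul_pow z⁻¹ (by rw [mem_range] at hi; omega : i ≤ n + 1)]
        linear_combination (-increment a i * z⁻¹ ^ (n + 1 - i)) * hinv i
    _ = a n := by
        rw [← h]
        linear_combination a n * hinv (n + 1)

end Increment

open scoped ComplexOrder in
theorem Complex.eq_one_of_norm_le_one_of_re_eq_one {v : ℂ} (hv : ‖v‖ ≤ 1) (hre : v.re = 1) :
    v = 1 := by
  have hnonneg : 0 ≤ v := re_eq_norm.mp (le_antisymm (re_le_norm v) (hre ▸ hv))
  exact Complex.ext hre (Complex.nonneg_iff.mp hnonneg).2.symm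

theorem Complex.eq_one_of_sum_mul_eq_sum {ι : Type*} {s : Finset ι} {c : ι → ℝ} {v : ι → ℂ}
    (hc : ∀ i ∈ s, 0 ≤ c i) (hv : ∀ i ∈ s, ‖v i‖ ≤ 1)
    (h : ∑ i ∈ s, (c i : ℂ) * v i = ∑ i ∈ s, (c i : ℂ)) {i : ι} (hi : i ∈ s) (hci : 0 < c i) :
    v i = 1 := by
  have hre_le : ∀ j ∈ s, (v j).re ≤ 1 := fun j hj => (re_le_norm _).trans (hv j hj)
  have hdefect : ∑ j ∈ s, c j * (1 - (v j).re) = 0 := by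
    have := congrArg Complex.re h
    simp only [Complex.re_sum, Complex.re_ofReal_mul, Complex.ofReal_re] at this
    simp only [mul_sub, mul_one, sum_sub_distrib, this, sub_self]
  have hterm := (sum_eq_zero_iff_of_nonneg fun j hj =>
    mul_nonneg (hc j hj) (sub_nonneg.mpr (hre_le j hj))).mp hdefect i hi
  refine eq_one_of_norm_le_one_of_re_eq_one (hv i hi) ?_
  linarith [(mul_eq_zero.mp hterm).resolve_left hci.ne']

theorem norm_lt_one_of_sum_mul_pow_eq_zero {a : ℕ → ℝ} {n k : ℕ} (hkn : k + 1 ≤ n)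
    (hinc : ∀ i ≤ n, 0 ≤ increment a i) (hk : 0 < increment a k) (hk' : 0 < increment a (k + 1))
    {z : ℂ} (hz : ∑ i ∈ range (n + 1), (a i : ℂ) * z ^ i = 0) : ‖z‖ < 1 := by
  by_contra! hz1
  have hz0 : z ≠ 0 := norm_pos_iff.mp (one_pos.trans_le hz1)
  have hu : ‖z⁻¹‖ ≤ 1 := by rw [norm_inv]; exact inv_le_one_of_one_le₀ hz1
  have hcast : ∀ i, ((increment a i : ℝ) : ℂ) = increment (fun j => (a j : ℂ)) i :=
    map_increment Complex.ofRealHom a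
  have hbalance : ∑ i ∈ range (n + 1), ((increment a i : ℝ) : ℂ) * z⁻¹ ^ (n + 1 - i)
      = ∑ i ∈ range (n + 1), ((increment a i : ℝ) : ℂ) := by
    simp only [hcast]
    rw [sum_range_succ_increment]
    exact sum_increment_mul_inv_pow_eq_of_sum_mul_pow_eq_zero hz0 hz
  -- `1` is an extreme point of the closed unit disc.
  have hpow : ∀ i ≤ n, 0 < increment a i → z⁻¹ ^ (n + 1 - i) = 1 := fun i hi hpos =>
    Complex.eq_one_of_sum_mul_eq_sum (v := fun j => z⁻¹ ^ (n + 1 - j))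
      (fun j hj => hinc j (by rw [mem_range] at hj; omega))
      (fun j _ => by rw [norm_pow]; exact pow_le_one₀ (norm_nonneg _) hu) hbalance
      (mem_range.mpr (by omega)) hpos
  have hz_eq_one : z = 1 := by
    have h := hpow k (by omega) hk
    rwa [show n + 1 - k = (n + 1 - (k + 1)) + 1 by omega, pow_succ, hpow (k + 1) hkn hk',
      one_mul, inv_eq_one] at h
  subst hz_eq_one
  have hsum : ∑ i ∈ range (n + 1), a i = 0 := by
    simp only [one_pow, mul_one] at hz
    exact_mod_cast hz
  exact hsum.not_gt (sum_range_succ_pos_of_increment_pos hinc hkn hk')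

theorem one_lt_norm_eval_of_one_lt_norm_sub_roots {G : ℂ[X]} (hG : 0 < G.natDegree)
    (hlc : 1 ≤ ‖G.leadingCoeff‖) {x : ℂ} (hroots : ∀ z ∈ G.roots, 1 < ‖x - z‖) :
    1 < ‖G.eval x‖ := by
  obtain ⟨z₀, hz₀⟩ := Complex.exists_root (natDegree_pos_iff_degree_pos.mp hG)
  have hG0 : G ≠ 0 := ne_zero_of_natDegree_gt hG
  obtain ⟨s, hs⟩ := Multiset.exists_cons_of_mem ((mem_roots hG0).mpr hz₀)
  rw [(IsAlgClosed.splits G).eval_eq_prod_roots, norm_mul]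
  refine one_lt_mul_of_le_of_lt hlc ?_
  rw [← normHom_apply, map_multiset_prod, Multiset.map_map, hs, Multiset.map_cons,
    Multiset.prod_cons]
  refine one_lt_mul_of_lt_of_le (hroots z₀ (hs ▸ Multiset.mem_cons_self _ _))
    (Multiset.one_le_prod fun r hr => ?_)
  obtain ⟨z, hz, rfl⟩ := Multiset.mem_map.mp hr
  exact (hroots z (hs ▸ Multiset.mem_cons_of_mem hz)).le

theorem one_lt_natAbs_eval_of_norm_aroots_lt_one {g : ℤ[X]} (hg : 0 < g.natDegree) {m : ℤ}
    (hm : 2 ≤ |m|) (hroots : ∀ z ∈ g.aroots ℂ, ‖z‖ < 1) : 1 < (g.eval m).natAbs := by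
  have hinj : Function.Injective (algebraMap ℤ ℂ) := (algebraMap ℤ ℂ).injective_int
  have key : 1 < ‖(g.map (algebraMap ℤ ℂ)).eval (m : ℂ)‖ := by
    refine one_lt_norm_eval_of_one_lt_norm_sub_roots (by rwa [natDegree_map_eq_of_injective hinj])
      ?_ fun z hz => ?_
    · rw [leadingCoeff_map_of_injective hinj, algebraMap_int_eq, eq_intCast, Complex.norm_intCast]
      exact_mod_cast Int.one_le_abs (leadingCoeff_ne_zero.mpr (ne_zero_of_natDegree_gt hg))
    · have hmC : (2 : ℝ) ≤ ‖(m : ℂ)‖ := by rw [Complex.norm_intCast]; exact_mod_cast hm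
      linarith [norm_sub_norm_le (m : ℂ) z, hroots z hz]
  rw [algebraMap_int_eq, eval_intCast_map, eq_intCast, Complex.norm_intCast, ← Int.cast_abs,
    ← Int.natCast_natAbs] at key
  exact_mod_cast key

theorem irreducible_of_natAbs_eval_prime {f : ℤ[X]} {m : ℤ} (hp : (f.eval m).natAbs.Prime)
    (hfactor : ∀ g, g ∣ f → 0 < g.natDegree → 1 < (g.eval m).natAbs) : Irreducible f := by
  have isUnit_of_dvd : ∀ g, g ∣ f → (g.eval m).natAbs = 1 → IsUnit g := by
    intro g hg hg1
    have hdeg : g.natDegree = 0 := by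
      by_contra hne
      exact (hfactor g hg (Nat.pos_of_ne_zero hne)).ne' hg1
    rw [eq_C_of_natDegree_eq_zero hdeg, isUnit_C, Int.isUnit_iff_natAbs_eq]
    rwa [eq_C_of_natDegree_eq_zero hdeg, eval_C] at hg1
  refine ⟨fun hu => hp.ne_one ?_, fun g h hgh => ?_⟩
  · exact Int.isUnit_iff_natAbs_eq.mp (hu.map (evalRingHom m))
  · rw [hgh, eval_mul, Int.natAbs_mul, Nat.prime_mul_iff] at hp
    rcases hp with ⟨-, hh⟩ | ⟨-, hg⟩
    · exact Or.inr (isUnit_of_dvd h (Dvd.intro_left g hgh.symm) hh)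
    · exact Or.inl (isUnit_of_dvd g (Dvd.intro h hgh.symm) hg)

theorem stmt_8 (n k : ℕ) (a : ℕ → ℤ) (hn : 1 ≤ n) (hk : k ≤ n - 1)
    (h0 : 0 < a 0)
    (hmono : ∀ i, i < n → a i ≤ a (i + 1))
    (hstrict1 : 0 < k → a (k - 1) < a k)
    (hstrict2 : a k < a (k + 1))
    (m : ℤ) (hm : 2 ≤ |m|)
    (hp : ((∑ i ∈ Finset.range (n + 1), Polynomial.C (a i) * Polynomial.X ^ i).eval m).natAbs.Prime) :
    Irreducible (∑ i ∈ Finset.range (n + 1), Polynomial.C (a i) * Polynomial.X ^ i) := by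
  set f := ∑ i ∈ range (n + 1), C (a i) * X ^ i
  let a' : ℕ → ℝ := fun i => a i
  have hinc : ∀ i ≤ n, 0 ≤ increment a' i := by
    rintro (_ | i) hi
    · simpa [increment, a'] using h0.le
    · simpa [increment, a'] using hmono i (by omega)
  have hk₀ : 0 < increment a' k := by
    rcases k with _ | k
    · simpa [increment, a'] using h0
    · simpa [increment, a'] using hstrict1 k.succ_pos
  have hk₁ : 0 < increment a' (k + 1) := by simpa [increment, a'] using hstrict2
  have hroots : ∀ z : ℂ, aeval z f = 0 → ‖z‖ < 1 := fun z hz =>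
    norm_lt_one_of_sum_mul_pow_eq_zero (by omega) hinc hk₀ hk₁ (by simpa [f, a'] using hz)
  refine irreducible_of_natAbs_eval_prime hp fun g hgf hg =>
    one_lt_natAbs_eval_of_norm_aroots_lt_one hg hm fun z hz =>
      hroots z (aeval_eq_zero_of_dvd_aeval_eq_zero hgf (mem_aroots.mp hz).2)
end
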